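/- arXiv:2301.03500 — 6 statements merged into one kernel-verified Lean document; each statement's English description precedes it below -/
import Mathlib

section
/- For a weak almost contact metric structure (φ, Q, ξ, η, g) on V, one has η ∘ φ = 0, i.e. η(φ X) = 0 for every X ∈ V (not only for X in D = ker η). -/
open RealInnerProductSpace

theorem weak_acm_stmt_2 {V : Type*} [NormedAddCommGroup V] [InnerProductSpace ℝ V]
    [FiniteDimensional ℝ V]
    {n : ℕ} (hn : 1 ≤ n) (hdim : Module.finrank ℝ V = 2 * n + 1)
    (φ Q : V →ₗ[ℝ] V) (hQbij : Function.Bijective Q)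
    (ξ : V) (η : V →ₗ[ℝ] ℝ)
    (hηξ : η ξ = 1)
    (hφφ : ∀ X : V, φ (φ X) = -(Q X) + η X • ξ)
    (hQξ : Q ξ = ξ)
    (hD : ∀ X : V, η X = 0 → η (φ X) = 0)
    (hcomp : ∀ X Y : V, ⟪φ X, φ Y⟫ = ⟪X, Q Y⟫ - η X * η Y)
    :
    ∀ X : V, η (φ X) = 0 := by
  have hξ0 : ξ ≠ 0 := by
    intro h
    rw [h] at hηξ
    simp at hηξ
  have hφφξ : φ (φ ξ) = 0 := by
    rw [hφφ, hQξ, hηξ, one_smul]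
    abel
  have hQφξ : Q (φ ξ) = η (φ ξ) • ξ := by
    have h := hφφ (φ ξ)
    rw [hφφξ, map_zero] at h
    rw [eq_comm, neg_add_eq_zero] at h
    exact h
  have hφξ : φ ξ = η (φ ξ) • ξ := by
    apply hQbij.injective
    rw [hQφξ, map_smul, hQξ]
  have hηφξ : η (φ ξ) = 0 := by
    set c := η (φ ξ) with hc
    have h : (c * c) • ξ = 0 := by
      have h2 : φ (φ ξ) = (c * c) • ξ := by rw [hφξ, map_smul, hφξ, smul_smul]
      rw [← h2, hφφξ]
    have := (smul_eq_zero.mp h).resolve_right hξ0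
    exact (mul_self_eq_zero).mp this
  intro X
  have hdec : φ X = φ (X - η X • ξ) + η X • φ ξ := by
    rw [map_sub, map_smul]; abel
  have hXD : η (X - η X • ξ) = 0 := by simp [hηξ]
  rw [hdec, map_add, map_smul, hD _ hXD, hηφξ]
  simp
end

section
/- For a weak almost contact metric structure (φ, Q, ξ, η, g) on a finite-dimensional V, the operator φ is skew-adjoint: ⟪φ X, Y⟫ = −⟪X, φ Y⟫ for all X, Y ∈ V. -/
open RealInnerProductSpace

theorem weak_acm_stmt_6 {V : Type*} [NormedAddCommGroup V] [InnerProductSpace ℝ V]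
    [FiniteDimensional ℝ V]
    {n : ℕ} (hn : 1 ≤ n) (hdim : Module.finrank ℝ V = 2 * n + 1)
    (φ Q : V →ₗ[ℝ] V) (hQbij : Function.Bijective Q)
    (ξ : V) (η : V →ₗ[ℝ] ℝ)
    (hηξ : η ξ = 1)
    (hφφ : ∀ X : V, φ (φ X) = -(Q X) + η X • ξ)
    (hQξ : Q ξ = ξ)
    (hD : ∀ X : V, η X = 0 → η (φ X) = 0)
    (hcomp : ∀ X Y : V, ⟪φ X, φ Y⟫ = ⟪X, Q Y⟫ - η X * η Y)
    :
    ∀ X Y : V, ⟪φ X, Y⟫ = -⟪X, φ Y⟫ := by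
  have hφφξ : φ (φ ξ) = 0 := by
    rw [hφφ, hQξ, hηξ, one_smul]; abel
  -- η(φξ) = 0
  have hc : η (φ ξ) = 0 := by
    have hZ : η (φ ξ - η (φ ξ) • ξ) = 0 := by
      simp [hηξ]
    have h := hD _ hZ
    rw [map_sub, map_smul, hφφξ, zero_sub, map_neg, map_smul, smul_eq_mul] at h
    have : η (φ ξ) * η (φ ξ) = 0 := by linarith
    exact mul_self_eq_zero.mp this
  -- φ ξ = 0
  have hφξ : φ ξ = 0 := by
    have h2 : ∀ Z, ⟪φ ξ, Z⟫ = (0:ℝ) := by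
      intro Z
      obtain ⟨Y, hY⟩ := hQbij.2 Z
      have h := hcomp (φ ξ) Y
      rw [hφφξ, inner_zero_left, hc, zero_mul, sub_zero, hY] at h
      linarith
    exact inner_self_eq_zero.mp (h2 (φ ξ))
  -- ⟪X, ξ⟫ = η X
  have hηX : ∀ X : V, ⟪X, ξ⟫ = η X := by
    intro X
    have h := hcomp X ξ
    rw [hφξ, inner_zero_right, hQξ, hηξ, mul_one] at h
    linarith
  -- η ∘ φ = 0
  have hηφ : ∀ X : V, η (φ X) = 0 := by
    intro X
    have h : η (X - η X • ξ) = 0 := by simp [hηξ]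
    have h2 := hD _ h
    rwa [map_sub, map_smul, hφξ, smul_zero, sub_zero] at h2
  -- φ Q = Q φ
  have hcomm : ∀ X : V, φ (Q X) = Q (φ X) := by
    intro X
    have h1 := congrArg φ (hφφ X)
    rw [map_add, map_neg, map_smul, hφξ, smul_zero, add_zero] at h1
    have h2 := hφφ (φ X)
    rw [hηφ, zero_smul, add_zero] at h2
    have := h1.symm.trans h2
    exact neg_inj.mp this
  -- key identity
  have key : ∀ X Y : V, ⟪φ X, Q Y⟫ = -⟪X, φ (Q Y)⟫ := by
    intro X Y
    have h := hcomp X (φ Y)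
    rw [hφφ Y, hηφ, mul_zero, sub_zero, ← hcomm, inner_add_right,
      inner_neg_right, real_inner_smul_right, hηX, hηφ, mul_zero, add_zero] at h
    linarith
  intro X Y
  obtain ⟨Y', hY'⟩ := hQbij.2 Y
  rw [← hY']
  exact key X Y'
end

section
/- For a weak almost contact metric structure (φ, Q, ξ, η, g) on V, the operators Q and φ commute: Q(φ X) = φ(Q X) for every X ∈ V. -/
open RealInnerProductSpace

theorem weak_acm_stmt_8 {V : Type*} [NormedAddCommGroup V] [InnerProductSpace ℝ V]
    [FiniteDimensional ℝ V]
    {n : ℕ} (hn : 1 ≤ n) (hdim : Module.finrank ℝ V = 2 * n + 1)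
    (φ Q : V →ₗ[ℝ] V) (hQbij : Function.Bijective Q)
    (ξ : V) (η : V →ₗ[ℝ] ℝ)
    (hηξ : η ξ = 1)
    (hφφ : ∀ X : V, φ (φ X) = -(Q X) + η X • ξ)
    (hQξ : Q ξ = ξ)
    (hD : ∀ X : V, η X = 0 → η (φ X) = 0)
    (hcomp : ∀ X Y : V, ⟪φ X, φ Y⟫ = ⟪X, Q Y⟫ - η X * η Y)
    :
    ∀ X : V, Q (φ X) = φ (Q X) := by
  have hξne : ξ ≠ 0 := by
    intro h; rw [h, map_zero] at hηξ; norm_num at hηξ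
  -- φ ξ = 0
  have h0 : φ (φ ξ) = 0 := by rw [hφφ, hηξ, hQξ]; simp
  have h1 : Q (φ ξ) = η (φ ξ) • ξ := by
    have h := hφφ (φ ξ)
    rw [h0, map_zero] at h
    exact neg_add_eq_zero.mp h.symm
  have h2 : φ ξ = η (φ ξ) • ξ := by
    apply hQbij.injective
    rw [h1, map_smul, hQξ]
  have hφξ : φ ξ = 0 := by
    have h3 : (η (φ ξ) * η (φ ξ)) • ξ = 0 := by
      have := h0
      rw [h2, map_smul, h2, smul_smul] at this
      simpa [hηξ] using this
    have h4 : η (φ ξ) = 0 := by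
      rcases smul_eq_zero.mp h3 with h | h
      · exact mul_self_eq_zero.mp h
      · exact absurd h hξne
    rw [h2, h4, zero_smul]
  -- η ∘ φ = 0
  have hηφ : ∀ X : V, η (φ X) = 0 := by
    intro X
    have hX0 : η (X - η X • ξ) = 0 := by simp [hηξ]
    have := hD _ hX0
    simpa [map_sub, map_smul, hφξ] using this
  -- main identity: apply φ to hφφ
  intro X
  have ha : φ (φ (φ X)) = -(Q (φ X)) + η (φ X) • ξ := hφφ (φ X)
  have hb : φ (φ (φ X)) = -(φ (Q X)) := by
    rw [hφφ X, map_add, map_neg, map_smul, hφξ, smul_zero, add_zero]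
  rw [hb, hηφ, zero_smul, add_zero] at ha
  exact neg_injective ha.symm
end

section
/- Let (φ, Q, ξ, η, g) be a weak almost contact metric structure on V and suppose there is a real λ > 0 with Q X = λ·X for all X ∈ D = ker η. Define φ' := λ^(−1/2)·φ. Then (φ', ξ, η) is an almost contact structure: φ'(φ' X) = −X + η(X)·ξ for all X ∈ V, together with φ' ξ = 0 and η(φ' X) = 0 for all X. -/
/-!
On `D = ker η` the hypothesis `Q = λ` turns `φ² = -Q + η ⊗ ξ` into `φ² = -λ P`, where
`P X = X - η X • ξ` is the projection onto `D` along `ξ`. Computing `φ³` in two ways shows that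
`φ` commutes with `P`, i.e. `η X • φ ξ = η (φ X) • ξ`; at `X = ξ` this makes `φ ξ` a multiple
`a • ξ` with `a² • ξ = φ² ξ = 0`, so `φ ξ = 0` and then `η ∘ φ = 0`. Rescaling by `λ^(-1/2)`
turns `φ² = -λ P` into `φ'² = -P`.
-/

open RealInnerProductSpace

section

variable {K V : Type*} [Field K] [AddCommGroup V] [Module K V]

theorem sq_eq_neg_smul_proj_of_eq_smul_on_ker {φ Q : V →ₗ[K] V} {ξ : V} {η : V →ₗ[K] K}
    {lam : K} (hφφ : ∀ X, φ (φ X) = -(Q X) + η X • ξ) (hQξ : Q ξ = ξ) (hηξ : η ξ = 1)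
    (hQD : ∀ X, η X = 0 → Q X = lam • X) (X : V) :
    φ (φ X) = -lam • (X - η X • ξ) := by
  have hQX : Q X = lam • (X - η X • ξ) + η X • ξ := by
    have h := hQD (X - η X • ξ) (by simp [hηξ])
    rw [map_sub, map_smul, hQξ] at h
    linear_combination (norm := module) h
  rw [hφφ, hQX]
  module

theorem smul_apply_eq_apply_smul_of_sq_eq_smul_proj {φ : V →ₗ[K] V} {ξ : V} {η : V →ₗ[K] K}
    {c : K} (hc : c ≠ 0) (hsq : ∀ X, φ (φ X) = c • (X - η X • ξ)) (X : V) :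
    η X • φ ξ = η (φ X) • ξ := by
  have h := congrArg φ (hsq X)
  rw [hsq (φ X), map_smul, map_sub, map_smul] at h
  simpa using (smul_right_injective V hc h).symm

theorem apply_eq_zero_and_comp_eq_zero_of_sq_eq_smul_proj {φ : V →ₗ[K] V} {ξ : V}
    {η : V →ₗ[K] K} (hηξ : η ξ = 1) {c : K} (hc : c ≠ 0)
    (hsq : ∀ X, φ (φ X) = c • (X - η X • ξ)) :
    φ ξ = 0 ∧ ∀ X, η (φ X) = 0 := by
  have hξ : ξ ≠ 0 := ne_zero_of_map (f := η) (by simp [hηξ])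
  have hcomm := smul_apply_eq_apply_smul_of_sq_eq_smul_proj hc hsq
  have hφξ : φ ξ = η (φ ξ) • ξ := by simpa [hηξ] using hcomm ξ
  have ha : η (φ ξ) = 0 := by
    have h : (η (φ ξ) * η (φ ξ)) • ξ = 0 := by
      rw [mul_smul, ← hφξ, ← map_smul, ← hφξ, hsq, hηξ, one_smul, sub_self, smul_zero]
    exact mul_self_eq_zero.mp ((smul_eq_zero.mp h).resolve_right hξ)
  have hφξ0 : φ ξ = 0 := by rw [hφξ, ha, zero_smul]
  refine ⟨hφξ0, fun X => ?_⟩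
  have h := hcomm X
  rw [hφξ0, smul_zero, eq_comm] at h
  exact (smul_eq_zero.mp h).resolve_right hξ

end

theorem sq_inv_sqrt_smul_eq_neg_proj {V : Type*} [AddCommGroup V] [Module ℝ V]
    {φ φ' : V →ₗ[ℝ] V} {ξ : V} {η : V →ₗ[ℝ] ℝ} {lam : ℝ} (hlam : 0 < lam)
    (hsq : ∀ X, φ (φ X) = -lam • (X - η X • ξ)) (hφ' : ∀ X, φ' X = (Real.sqrt lam)⁻¹ • φ X)
    (X : V) :
    φ' (φ' X) = -X + η X • ξ := by
  have hinv : (Real.sqrt lam)⁻¹ * (Real.sqrt lam)⁻¹ * lam = 1 := by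
    rw [← mul_inv, Real.mul_self_sqrt hlam.le, inv_mul_cancel₀ hlam.ne']
  rw [hφ', hφ', map_smul, hsq, smul_smul, smul_smul]
  linear_combination (norm := module) hinv • (η X • ξ - X)

theorem weak_acm_stmt_12_general {V : Type*} [NormedAddCommGroup V] [InnerProductSpace ℝ V]
    (φ Q : V →ₗ[ℝ] V)
    (ξ : V) (η : V →ₗ[ℝ] ℝ)
    (hηξ : η ξ = 1)
    (hφφ : ∀ X : V, φ (φ X) = -(Q X) + η X • ξ)
    (hQξ : Q ξ = ξ)
    (lam : ℝ) (hlam : 0 < lam) (hQD : ∀ X : V, η X = 0 → Q X = lam • X)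
    (φ' : V →ₗ[ℝ] V) (hφ' : ∀ X : V, φ' X = (Real.sqrt lam)⁻¹ • φ X)
    :
    (∀ X : V, φ' (φ' X) = -X + η X • ξ) ∧ φ' ξ = 0 ∧ (∀ X : V, η (φ' X) = 0) := by
  have hsq := sq_eq_neg_smul_proj_of_eq_smul_on_ker hφφ hQξ hηξ hQD
  obtain ⟨hφξ, hηφ⟩ :=
    apply_eq_zero_and_comp_eq_zero_of_sq_eq_smul_proj hηξ (neg_ne_zero.mpr hlam.ne') hsq
  refine ⟨sq_inv_sqrt_smul_eq_neg_proj hlam hsq hφ', ?_, fun X => ?_⟩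
  · rw [hφ', hφξ, smul_zero]
  · rw [hφ', map_smul, hηφ, smul_zero]

theorem weak_acm_stmt_12 {V : Type*} [NormedAddCommGroup V] [InnerProductSpace ℝ V]
    [FiniteDimensional ℝ V]
    {n : ℕ} (hn : 1 ≤ n) (hdim : Module.finrank ℝ V = 2 * n + 1)
    (φ Q : V →ₗ[ℝ] V) (hQbij : Function.Bijective Q)
    (ξ : V) (η : V →ₗ[ℝ] ℝ)
    (hηξ : η ξ = 1)
    (hφφ : ∀ X : V, φ (φ X) = -(Q X) + η X • ξ)
    (hQξ : Q ξ = ξ)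
    (hD : ∀ X : V, η X = 0 → η (φ X) = 0)
    (hcomp : ∀ X Y : V, ⟪φ X, φ Y⟫ = ⟪X, Q Y⟫ - η X * η Y)
    (lam : ℝ) (hlam : 0 < lam) (hQD : ∀ X : V, η X = 0 → Q X = lam • X)
    (φ' : V →ₗ[ℝ] V) (hφ' : ∀ X : V, φ' X = (Real.sqrt lam)⁻¹ • φ X)
    :
    (∀ X : V, φ' (φ' X) = -X + η X • ξ) ∧ φ' ξ = 0 ∧ (∀ X : V, η (φ' X) = 0) :=
  weak_acm_stmt_12_general φ Q ξ η hηξ hφφ hQξ lam hlam hQD φ' hφ'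
end

section
/- Let (φ, Q, ξ, η, g) be a weak almost contact metric structure on V and suppose there is a real λ > 0 with Q X = λ·X for all X ∈ D = ker η. Define φ' := λ^(−1/2)·φ and the bilinear form g'(X, Y) := λ^(1/2)·(⟪X, Y⟫ − η(X)η(Y)) + η(X)η(Y). Then g' is a positive definite symmetric bilinear form (an inner product) on V, and g' is compatible with the classical almost contact structure (φ', ξ, η): g'(φ' X, φ' Y) = g'(X, Y) − η(X)η(Y) for all X, Y ∈ V; moreover g'(ξ, X) = η(X) for all X. -/
/-!
On `D = ker η` the structure tensor is `Q = λ`, so `Q = λ + (1 - λ) η ⊗ ξ` everywhere. This forces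
`φ ξ = 0`: the vector `u = φ ξ` satisfies `φ u = 0`, hence `Q u = η(u) ξ`, hence `u = η(u) ξ`, and then
`0 = φ u = η(u)² ξ`. Compatibility then gives `⟪X, ξ⟫ = η X` and `⟪φ X, φ Y⟫ = λ (⟪X, Y⟫ - η X η Y)`,
so rescaling the metric on `D` by `√λ` and `φ` by `1/√λ` restores the classical compatibility, while
`g' X X = √λ ‖X - η(X) ξ‖² + η(X)²` is positive definite.
-/

open RealInnerProductSpace

section Algebra

variable {K V : Type*} [Field K] [AddCommGroup V] [Module K V]
  {φ Q : V →ₗ[K] V} {ξ : V} {η : V →ₗ[K] K} {lam : K}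

theorem LinearMap.apply_eq_of_eq_smul_on_ker (hηξ : η ξ = 1) (hQξ : Q ξ = ξ)
    (hQD : ∀ X, η X = 0 → Q X = lam • X) (X : V) :
    Q X = lam • X + ((1 - lam) * η X) • ξ := by
  have hD := hQD (X - η X • ξ) (by simp [hηξ])
  rw [map_sub, map_smul, hQξ, sub_eq_iff_eq_add] at hD
  rw [hD]
  module

theorem LinearMap.apply_reeb_eq_zero (hηξ : η ξ = 1)
    (hφφ : ∀ X, φ (φ X) = -(Q X) + η X • ξ)
    (hQ : ∀ X, Q X = lam • X + ((1 - lam) * η X) • ξ) (hlam : lam ≠ 0) :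
    φ ξ = 0 := by
  set u := φ ξ
  have hφu : φ u = 0 := by
    rw [hφφ, hQ, hηξ]
    module
  have hu : u = η u • ξ := by
    have h := hφφ u
    rw [hφu, map_zero, hQ] at h
    refine smul_right_injective V hlam (?_ : lam • u = lam • (η u • ξ))
    rw [smul_smul]
    linear_combination (norm := module) h
  have hsmul : η u • u = 0 :=
    calc η u • u = φ (η u • ξ) := by rw [map_smul]
      _ = 0 := by rw [← hu, hφu]
  have hηu : η u = 0 := by simpa using congrArg η hsmul
  rw [hu, hηu, zero_smul]

theorem LinearMap.eta_apply_eq_zero (hηξ : η ξ = 1) (hφξ : φ ξ = 0)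
    (hD : ∀ X, η X = 0 → η (φ X) = 0) (X : V) : η (φ X) = 0 := by
  have h := hD (X - η X • ξ) (by simp [hηξ])
  rwa [map_sub, map_smul, hφξ, smul_zero, sub_zero] at h

end Algebra

section InnerProduct

variable {V : Type*} [NormedAddCommGroup V] [InnerProductSpace ℝ V]
  {φ Q : V →ₗ[ℝ] V} {ξ : V} {η : V →ₗ[ℝ] ℝ}

theorem inner_reeb_eq (hηξ : η ξ = 1) (hQξ : Q ξ = ξ) (hφξ : φ ξ = 0)
    (hcomp : ∀ X Y, ⟪φ X, φ Y⟫ = ⟪X, Q Y⟫ - η X * η Y) (X : V) : ⟪X, ξ⟫ = η X := by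
  have h := hcomp X ξ
  rw [hQξ, hηξ, hφξ, inner_zero_right, mul_one] at h
  linarith

theorem inner_apply_apply_eq {lam : ℝ} (hcomp : ∀ X Y, ⟪φ X, φ Y⟫ = ⟪X, Q Y⟫ - η X * η Y)
    (hQ : ∀ X, Q X = lam • X + ((1 - lam) * η X) • ξ) (hξ : ∀ X, ⟪X, ξ⟫ = η X) (X Y : V) :
    ⟪φ X, φ Y⟫ = lam * (⟪X, Y⟫ - η X * η Y) := by
  rw [hcomp, hQ, inner_add_right, real_inner_smul_right, real_inner_smul_right, hξ]
  ring

theorem inner_self_sub_mul_self_eq (hηξ : η ξ = 1) (hξ : ∀ X, ⟪X, ξ⟫ = η X) (X : V) :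
    ⟪X, X⟫ - η X * η X = ‖X - η X • ξ‖ ^ 2 := by
  rw [← real_inner_self_eq_norm_sq, inner_sub_sub_self, real_inner_smul_left,
    real_inner_smul_right, real_inner_smul_left, real_inner_smul_right, 
    real_inner_comm X ξ, hξ, hξ, hηξ]
  ring

/-- Scaling the metric by `c` on `ker η` while keeping `ξ` a unit normal to it. -/
def kerHomotheticInner (c : ℝ) (η : V →ₗ[ℝ] ℝ) (X Y : V) : ℝ :=
  c * (⟪X, Y⟫ - η X * η Y) + η X * η Y

theorem kerHomotheticInner_comm (c : ℝ) (X Y : V) :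
    kerHomotheticInner c η X Y = kerHomotheticInner c η Y X := by
  simp only [kerHomotheticInner, real_inner_comm X Y, mul_comm (η X)]

theorem kerHomotheticInner_self_pos {c : ℝ} (hc : 0 < c) (hηξ : η ξ = 1)
    (hξ : ∀ X, ⟪X, ξ⟫ = η X) {X : V} (hX : X ≠ 0) : 0 < kerHomotheticInner c η X X := by
  rw [kerHomotheticInner, inner_self_sub_mul_self_eq hηξ hξ]
  rcases eq_or_ne (η X) 0 with hηX | hηX
  · rw [hηX, zero_smul, sub_zero, mul_zero, add_zero]
    positivity
  · have := mul_self_pos.mpr hηX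
    positivity

theorem kerHomotheticInner_eta_left (hηξ : η ξ = 1) (hξ : ∀ X, ⟪X, ξ⟫ = η X) (c : ℝ) (X : V) :
    kerHomotheticInner c η ξ X = η X := by
  rw [kerHomotheticInner, real_inner_comm, hξ, hηξ]
  ring

theorem kerHomotheticInner_inv_smul_apply {c : ℝ} (hc : c ≠ 0)
    (hφ : ∀ X Y, ⟪φ X, φ Y⟫ = c ^ 2 * (⟪X, Y⟫ - η X * η Y)) (hηφ : ∀ X, η (φ X) = 0)
    (X Y : V) :
    kerHomotheticInner c η (c⁻¹ • φ X) (c⁻¹ • φ Y) = kerHomotheticInner c η X Y - η X * η Y := by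
  simp only [kerHomotheticInner, map_smul, hηφ, smul_zero, mul_zero, add_zero,
    real_inner_smul_left, real_inner_smul_right, hφ]
  field_simp
  ring

end InnerProduct

theorem weak_acm_stmt_13_general {V : Type*} [NormedAddCommGroup V] [InnerProductSpace ℝ V]
    (φ Q : V →ₗ[ℝ] V)
    (ξ : V) (η : V →ₗ[ℝ] ℝ)
    (hηξ : η ξ = 1)
    (hφφ : ∀ X : V, φ (φ X) = -(Q X) + η X • ξ)
    (hQξ : Q ξ = ξ)
    (hD : ∀ X : V, η X = 0 → η (φ X) = 0)
    (hcomp : ∀ X Y : V, ⟪φ X, φ Y⟫ = ⟪X, Q Y⟫ - η X * η Y)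
    (lam : ℝ) (hlam : 0 < lam) (hQD : ∀ X : V, η X = 0 → Q X = lam • X)
    (φ' : V →ₗ[ℝ] V) (hφ' : ∀ X : V, φ' X = (Real.sqrt lam)⁻¹ • φ X)
    (g' : V → V → ℝ)
    (hg' : ∀ X Y : V, g' X Y = Real.sqrt lam * (⟪X, Y⟫ - η X * η Y) + η X * η Y)
    :
    (∀ X Y : V, g' X Y = g' Y X) ∧
    (∀ X : V, X ≠ 0 → 0 < g' X X) ∧
    (∀ X Y : V, g' (φ' X) (φ' Y) = g' X Y - η X * η Y) ∧
    (∀ X : V, g' ξ X = η X) := by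
  have hQ := Q.apply_eq_of_eq_smul_on_ker hηξ hQξ hQD
  have hφξ := φ.apply_reeb_eq_zero hηξ hφφ hQ hlam.ne'
  have hξ := inner_reeb_eq hηξ hQξ hφξ hcomp
  have hφ : ∀ X Y, ⟪φ X, φ Y⟫ = √lam ^ 2 * (⟪X, Y⟫ - η X * η Y) := by
    rw [Real.sq_sqrt hlam.le]
    exact inner_apply_apply_eq hcomp hQ hξ
  obtain rfl : g' = kerHomotheticInner √lam η := funext₂ hg'
  refine ⟨kerHomotheticInner_comm _, fun X => kerHomotheticInner_self_pos
    (Real.sqrt_pos.mpr hlam) hηξ hξ, fun X Y => ?_, kerHomotheticInner_eta_left hηξ hξ _⟩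
  rw [hφ', hφ']
  exact kerHomotheticInner_inv_smul_apply (Real.sqrt_pos.mpr hlam).ne' hφ
    (φ.eta_apply_eq_zero hηξ hφξ hD) X Y

theorem weak_acm_stmt_13 {V : Type*} [NormedAddCommGroup V] [InnerProductSpace ℝ V]
    [FiniteDimensional ℝ V]
    {n : ℕ} (hn : 1 ≤ n) (hdim : Module.finrank ℝ V = 2 * n + 1)
    (φ Q : V →ₗ[ℝ] V) (hQbij : Function.Bijective Q)
    (ξ : V) (η : V →ₗ[ℝ] ℝ)
    (hηξ : η ξ = 1)
    (hφφ : ∀ X : V, φ (φ X) = -(Q X) + η X • ξ)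
    (hQξ : Q ξ = ξ)
    (hD : ∀ X : V, η X = 0 → η (φ X) = 0)
    (hcomp : ∀ X Y : V, ⟪φ X, φ Y⟫ = ⟪X, Q Y⟫ - η X * η Y)
    (lam : ℝ) (hlam : 0 < lam) (hQD : ∀ X : V, η X = 0 → Q X = lam • X)
    (φ' : V →ₗ[ℝ] V) (hφ' : ∀ X : V, φ' X = (Real.sqrt lam)⁻¹ • φ X)
    (g' : V → V → ℝ)
    (hg' : ∀ X Y : V, g' X Y = Real.sqrt lam * (⟪X, Y⟫ - η X * η Y) + η X * η Y)
    :
    (∀ X Y : V, g' X Y = g' Y X) ∧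
    (∀ X : V, X ≠ 0 → 0 < g' X X) ∧
    (∀ X Y : V, g' (φ' X) (φ' Y) = g' X Y - η X * η Y) ∧
    (∀ X : V, g' ξ X = η X) :=
  weak_acm_stmt_13_general φ Q ξ η hηξ hφφ hQξ hD hcomp lam hlam hQD φ' hφ' g' hg'
end

section
/- Let n ≥ 1 be odd and a > 0. In Euclidean space ℝ^(2n+2) with coordinates (u_1, …, u_{2n+2}), define the linear vector field ξ by pairing the coordinates: for 1 ≤ k ≤ (n+1)/2, the (2k−1)-th component of ξ(u) is −u_{2k} and the (2k)-th component is u_{2k−1}; and for 0 ≤ j ≤ (n−1)/2, the (n+2+2j)-th component of ξ(u) is −√a·u_{n+3+2j} and the (n+3+2j)-th component is √a·u_{n+2+2j}. Let F(u) = Σ_{i=1}^{n+1} u_i² + a·Σ_{i=n+2}^{2n+2} u_i² and let M = {u ∈ ℝ^(2n+2) : F(u) = 1} be the ellipsoid. Then: (i) the linear map u ↦ ξ(u) is skew-adjoint, ⟪ξ(u), v⟫ = −⟪u, ξ(v)⟫ for all u, v (so ξ is a Killing vector field on Euclidean space); (ii) ξ is tangent to the level sets of F: ⟪ξ(u), w(u)⟫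 = 0 for all u, where w(u) is the gradient of F at u, with components 2u_i for 1 ≤ i ≤ n+1 and 2a·u_i for n+2 ≤ i ≤ 2n+2; (iii) ‖ξ(u)‖² = F(u) for all u, so the restriction of ξ to M has unit length: ‖ξ(u)‖ = 1 for every u ∈ M. -/
open RealInnerProductSpace

/-!
Pair the coordinates of `ℝ^(2n+2)` as `(u₀, u₁), (u₂, u₃), …`; since `n` is odd, each pair lies
in one of the two blocks. On every pair `ξ` is a quarter turn scaled by `c = 1` (first block) or
`c = √a` (second block), and such a field is skew, is orthogonal to any vector field that scales
each pair by a constant (as the gradient of `F` does), and has `‖ξ u‖² = Σ c² (u₂ₜ² + u₂ₜ₊₁²)`,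
which is `F u` because `c² ∈ {1, a}` is exactly the coefficient of `F` on the pair.
-/

namespace Fin

variable {N : ℕ}

def pairFst (t : Fin N) : Fin (2 * N) := ⟨2 * t, by omega⟩

def pairSnd (t : Fin N) : Fin (2 * N) := ⟨2 * t + 1, by omega⟩

theorem val_pairFst_div_two (t : Fin N) : (t.pairFst : ℕ) / 2 = t := by
  simp [pairFst]

theorem val_pairSnd_div_two (t : Fin N) : (t.pairSnd : ℕ) / 2 = t := by
  simp only [pairSnd]
  omega

theorem sum_univ_pairs {M : Type*} [AddCommMonoid M] (f : Fin (2 * N) → M) :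
    ∑ i, f i = ∑ t : Fin N, (f t.pairFst + f t.pairSnd) := by
  rw [← (finProdFinEquiv.trans (finCongr (mul_comm N 2))).sum_comp, Fintype.sum_prod_type]
  refine Finset.sum_congr rfl fun t _ => ?_
  rw [Fin.sum_univ_two]
  congr 2 <;> ext <;> simp [pairFst, pairSnd, finProdFinEquiv, add_comm]

end Fin

section PairRotation

variable {N : ℕ}

theorem EuclideanSpace.real_inner_eq_sum_pairs (x y : EuclideanSpace ℝ (Fin (2 * N))) :
    ⟪x, y⟫ = ∑ t : Fin N, (x t.pairFst * y t.pairFst + x t.pairSnd * y t.pairSnd) := by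
  simp only [PiLp.inner_apply, RCLike.inner_apply, conj_trivial, Fin.sum_univ_pairs, mul_comm]

def IsPairRotation (c : Fin N → ℝ)
    (ξ : EuclideanSpace ℝ (Fin (2 * N)) → EuclideanSpace ℝ (Fin (2 * N))) : Prop :=
  ∀ u t, ξ u t.pairFst = -(c t * u t.pairSnd) ∧ ξ u t.pairSnd = c t * u t.pairFst

namespace IsPairRotation

variable {c : Fin N → ℝ} {ξ : EuclideanSpace ℝ (Fin (2 * N)) → EuclideanSpace ℝ (Fin (2 * N))}

theorem inner_apply_left (hξ : IsPairRotation c ξ) (u v : EuclideanSpace ℝ (Fin (2 * N))) :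
    ⟪ξ u, v⟫ = -⟪u, ξ v⟫ := by
  simp only [EuclideanSpace.real_inner_eq_sum_pairs, ← Finset.sum_neg_distrib]
  refine Finset.sum_congr rfl fun t _ => ?_
  rw [(hξ u t).1, (hξ u t).2, (hξ v t).1, (hξ v t).2]
  ring

theorem inner_apply_eq_zero_of_pair_scaling (hξ : IsPairRotation c ξ) {d : Fin N → ℝ}
    {u w : EuclideanSpace ℝ (Fin (2 * N))}
    (hw : ∀ t, w t.pairFst = d t * u t.pairFst ∧ w t.pairSnd = d t * u t.pairSnd) :
    ⟪ξ u, w⟫ = 0 := by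
  rw [EuclideanSpace.real_inner_eq_sum_pairs]
  refine Finset.sum_eq_zero fun t _ => ?_
  rw [(hξ u t).1, (hξ u t).2, (hw t).1, (hw t).2]
  ring

theorem norm_apply_sq (hξ : IsPairRotation c ξ) (u : EuclideanSpace ℝ (Fin (2 * N))) :
    ‖ξ u‖ ^ 2 = ∑ t, c t ^ 2 * (u t.pairFst ^ 2 + u t.pairSnd ^ 2) := by
  rw [← real_inner_self_eq_norm_sq, EuclideanSpace.real_inner_eq_sum_pairs]
  refine Finset.sum_congr rfl fun t _ => ?_
  rw [(hξ u t).1, (hξ u t).2]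
  ring

end IsPairRotation

end PairRotation

section Ellipsoid

noncomputable def ellipsoidPairWeight (n : ℕ) (a : ℝ) (t : Fin (n + 1)) : ℝ :=
  if (t : ℕ) < (n + 1) / 2 then 1 else √a

variable {n : ℕ} {a : ℝ}

theorem ellipsoidPairWeight_sq (hodd : n % 2 = 1) (ha : 0 ≤ a) {t : Fin (n + 1)} {i : ℕ}
    (hi : i / 2 = t) : ellipsoidPairWeight n a t ^ 2 = if i < n + 1 then 1 else a := by
  unfold ellipsoidPairWeight
  split_ifs <;> first | omega | simp [Real.sq_sqrt ha]

theorem isPairRotation_ellipsoidPairWeight (hodd : n % 2 = 1)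
    (ξ : EuclideanSpace ℝ (Fin (2 * (n + 1))) → EuclideanSpace ℝ (Fin (2 * (n + 1))))
    (hξ1 : ∀ (u : EuclideanSpace ℝ (Fin (2 * (n + 1)))) (k : ℕ) (hk : k < (n + 1) / 2),
      ξ u ⟨2 * k, by omega⟩ = -(u ⟨2 * k + 1, by omega⟩) ∧
      ξ u ⟨2 * k + 1, by omega⟩ = u ⟨2 * k, by omega⟩)
    (hξ2 : ∀ (u : EuclideanSpace ℝ (Fin (2 * (n + 1)))) (j : ℕ) (hj : j ≤ (n - 1) / 2),
      ξ u ⟨n + 1 + 2 * j, by omega⟩ = -(Real.sqrt a * u ⟨n + 2 + 2 * j, by omega⟩) ∧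
      ξ u ⟨n + 2 + 2 * j, by omega⟩ = Real.sqrt a * u ⟨n + 1 + 2 * j, by omega⟩) :
    IsPairRotation (ellipsoidPairWeight n a) ξ := by
  intro u t
  unfold ellipsoidPairWeight
  split_ifs with ht
  · simp only [one_mul]
    exact hξ1 u t ht
  · -- the pair `t` of the second block is the pair `j = t - (n + 1) / 2` of `hξ2`
    have hfst : t.pairFst = ⟨n + 1 + 2 * (t - (n + 1) / 2), by omega⟩ :=
      Fin.ext (by simp only [Fin.pairFst]; omega)
    have hsnd : t.pairSnd = ⟨n + 2 + 2 * (t - (n + 1) / 2), by omega⟩ :=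
      Fin.ext (by simp only [Fin.pairSnd]; omega)
    rw [hfst, hsnd]
    exact hξ2 u (t - (n + 1) / 2) (by omega)

end Ellipsoid

/-- The ellipsoid example: on `ℝ^(2n+2)` (n odd), the linear vector field `ξ`
pairing the coordinates (with weight `√a` on the second block) is skew-adjoint
(hence Killing), is tangent to the level sets of
`F(u) = Σ_{i=1}^{n+1} u_i² + a Σ_{i=n+2}^{2n+2} u_i²`, and satisfies
`‖ξ(u)‖² = F(u)`, so it has unit length on the ellipsoid `M = {F = 1}`.
(Indices below are 0-based: the first block is `0 ≤ i ≤ n`, the second block is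
`n+1 ≤ i ≤ 2n+1`.) -/
theorem ellipsoid_unit_killing
    {n : ℕ} (hodd : n % 2 = 1) (a : ℝ) (ha : 0 < a)
    (ξ : EuclideanSpace ℝ (Fin (2 * n + 2)) →ₗ[ℝ] EuclideanSpace ℝ (Fin (2 * n + 2)))
    -- first block: for 1 ≤ k ≤ (n+1)/2, components 2k−1 and 2k (1-based) are
    -- −u_{2k} and u_{2k−1}; in 0-based indexing, for k < (n+1)/2:
    (hξ1 : ∀ (u : EuclideanSpace ℝ (Fin (2 * n + 2))) (k : ℕ) (hk : k < (n + 1) / 2),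
      ξ u ⟨2 * k, by omega⟩ = -(u ⟨2 * k + 1, by omega⟩) ∧
      ξ u ⟨2 * k + 1, by omega⟩ = u ⟨2 * k, by omega⟩)
    -- second block: for 0 ≤ j ≤ (n−1)/2, components n+2+2j and n+3+2j (1-based)
    -- are −√a·u_{n+3+2j} and √a·u_{n+2+2j}; in 0-based indexing:
    (hξ2 : ∀ (u : EuclideanSpace ℝ (Fin (2 * n + 2))) (j : ℕ) (hj : j ≤ (n - 1) / 2),
      ξ u ⟨n + 1 + 2 * j, by omega⟩ = -(Real.sqrt a * u ⟨n + 2 + 2 * j, by omega⟩) ∧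
      ξ u ⟨n + 2 + 2 * j, by omega⟩ = Real.sqrt a * u ⟨n + 1 + 2 * j, by omega⟩)
    (F : EuclideanSpace ℝ (Fin (2 * n + 2)) → ℝ)
    (hF : ∀ u, F u = ∑ i : Fin (2 * n + 2),
      (if (i : ℕ) < n + 1 then (1 : ℝ) else a) * (u i) ^ 2)
    (w : EuclideanSpace ℝ (Fin (2 * n + 2)) → EuclideanSpace ℝ (Fin (2 * n + 2)))
    (hw : ∀ u i, w u i = (if (i : ℕ) < n + 1 then (2 : ℝ) else 2 * a) * u i) :
    -- (i) ξ is a skew-adjoint linear map, hence a Killing field on Euclidean space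
    (∀ u v : EuclideanSpace ℝ (Fin (2 * n + 2)), ⟪ξ u, v⟫ = -⟪u, ξ v⟫) ∧
    -- (ii) ξ is orthogonal to the gradient of F, i.e. tangent to the level sets of F
    (∀ u : EuclideanSpace ℝ (Fin (2 * n + 2)), ⟪ξ u, w u⟫ = 0) ∧
    -- (iii) ‖ξ(u)‖² = F(u); in particular ξ has unit length on M = {F = 1}
    (∀ u : EuclideanSpace ℝ (Fin (2 * n + 2)), ‖ξ u‖ ^ 2 = F u) ∧
    (∀ u : EuclideanSpace ℝ (Fin (2 * n + 2)), F u = 1 → ‖ξ u‖ = 1) := by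
  have hξ := isPairRotation_ellipsoidPairWeight hodd ξ hξ1 hξ2
  have hweight (t : Fin (n + 1)) {i : ℕ} (hi : i / 2 = t) :=
    ellipsoidPairWeight_sq hodd ha.le hi
  have hnorm (u : EuclideanSpace ℝ (Fin (2 * n + 2))) : ‖ξ u‖ ^ 2 = F u := by
    rw [hξ.norm_apply_sq, hF u]
    refine Eq.trans ?_ (Fin.sum_univ_pairs (N := n + 1) _).symm
    refine Finset.sum_congr rfl fun t _ => ?_
    rw [← hweight t t.val_pairFst_div_two, ← hweight t t.val_pairSnd_div_two]
    ring
  refine ⟨hξ.inner_apply_left, fun u => ?_, hnorm, fun u hu => ?_⟩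
  · refine hξ.inner_apply_eq_zero_of_pair_scaling (d := fun t => 2 * ellipsoidPairWeight n a t ^ 2)
      fun t => ⟨?_, ?_⟩
    · rw [hw, hweight t t.val_pairFst_div_two]
      split_ifs <;> ring
    · rw [hw, hweight t t.val_pairSnd_div_two]
      split_ifs <;> ring
  · rw [← pow_eq_one_iff_of_nonneg (norm_nonneg _) two_ne_zero, hnorm u, hu]
end
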